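/- Let n ≥ 3 and let i, j, k in {1,...,n} be distinct. In the group G := Graphs(n+1) ⋊ S_{n+1}, where S_{n+1} acts on graphs on vertices {0,...,n} by permuting vertices, define x_m := (e_{0m}, (0 m)) for m = 1,...,n, where e_{0m} is the graph with single edge {0,m}. Then (x_i x_j x_i x_k)^2 = (e_{0i} + e_{ik} + e_{kj} + e_{j0}, id), the 4-cycle graph on vertices 0, i, k, j with identity permutation. -/

import Mathlib

open Equiv Finset

abbrev Vtx (n : ℕ) := Fin (n+1)
abbrev Edge (n : ℕ) := {e : Sym2 (Vtx n) // ¬ e.IsDiag}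
abbrev Graphs (n : ℕ) := Edge n → ZMod 2

/-- relabelling of edges by a permutation of vertices -/
def permEdge {n : ℕ} (σ : Perm (Vtx n)) : Edge n ≃ Edge n where
  toFun e := ⟨Sym2.map σ e.1, by
    simpa [Sym2.isDiag_map σ.injective] using e.2⟩
  invFun e := ⟨Sym2.map σ.symm e.1, by
    simpa [Sym2.isDiag_map σ.symm.injective] using e.2⟩
  left_inv e := by
    ext1
    simp [Sym2.map_map]
  right_inv e := by
    ext1
    simp [Sym2.map_map]

/-- action of a vertex permutation on graphs -/
def gact {n : ℕ} (σ : Perm (Vtx n)) : Graphs n ≃+ Graphs n where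
  toFun g := fun e => g ((permEdge σ).symm e)
  invFun g := fun e => g (permEdge σ e)
  left_inv g := by funext e; simp
  right_inv g := by funext e; simp
  map_add' g h := rfl

lemma gact_mul {n : ℕ} (σ τ : Perm (Vtx n)) (g : Graphs n) :
    gact (σ * τ) g = gact σ (gact τ g) := by
  funext e
  simp only [gact, AddEquiv.coe_mk, Equiv.coe_fn_mk, Equiv.symm]
  congr 1
  ext1
  simp [permEdge, Sym2.map_map]
  rfl

/-- the action as a homomorphism to automorphisms, multiplicatively -/
def φn (n : ℕ) : Perm (Vtx n) →* MulAut (Multiplicative (Graphs n)) where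
  toFun σ := AddEquiv.toMultiplicative (gact σ)
  map_one' := by
    ext g e
    simp [gact, permEdge]
    first
      | rfl
      | exact congrArg (fun x => Multiplicative.toAdd g x) (Subtype.ext (congrFun Sym2.map_id _))
  map_mul' σ τ := by
    ext g e
    exact congrFun (gact_mul σ τ g.toAdd) e

/-- the ambient group `Graphs(n+1) ⋊ S_{n+1}` -/
abbrev DG (n : ℕ) := SemidirectProduct (Multiplicative (Graphs n)) (Perm (Vtx n)) (φn n)

/-- the single-edge graph with edge `{u,v}` -/
def single {n : ℕ} (u v : Vtx n) : Graphs n :=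
  fun e => if e.1 = s(u, v) then 1 else 0

/-- the generator `x_m = (e_{0m}, (0 m))` -/
def xgen {n : ℕ} (m : Vtx n) : DG n :=
  ⟨Multiplicative.ofAdd (single 0 m), Equiv.swap 0 m⟩

/-- the degree of a vertex in a graph -/
def deg {n : ℕ} (g : Graphs n) (v : Vtx n) : ℕ :=
  (Finset.univ.filter (fun e : Edge n => v ∈ e.1 ∧ g e = 1)).card

/-- the number of edges of a graph -/
def nedges {n : ℕ} (g : Graphs n) : ℕ :=
  (Finset.univ.filter (fun e : Edge n => g e = 1)).card

/-- all degrees even and an even number of edges -/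
def evenGraph {n : ℕ} (g : Graphs n) : Prop :=
  (∀ v : Vtx n, Even (deg g v)) ∧ Even (nedges g)

/-- the subgroup generated by the `x_m`, `m = 1, …, n` -/
def Dn (n : ℕ) : Subgroup (DG n) :=
  Subgroup.closure {x | ∃ m : Vtx n, m ≠ 0 ∧ x = xgen m}

/-- the complete graph -/
def complete (n : ℕ) : Graphs n := fun _ => 1

/-! `x_i x_j x_i` is the triangle on `0, i, j` with the transposition `(i j)`, so
`x_i x_j x_i x_k` is that triangle plus the edge `0k`, with the involution `(i j)(0 k)`.
Squaring `(γ, σ)` with `σ² = 1` gives `(γ + σ·γ, 1)`; the involution maps the triangle and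
`0k` to the triangle on `k, j, i` and `k0`, and in characteristic 2 the common edges `ij`
and `0k` cancel, leaving the 4-cycle `0, i, k, j`. -/

lemma gact_single {n : ℕ} (σ : Perm (Vtx n)) (u v : Vtx n) :
    gact σ (single u v) = single (σ u) (σ v) := by
  funext e
  change (if Sym2.map σ.symm e.1 = s(u, v) then (1 : ZMod 2) else 0) =
    (if e.1 = s(σ u, σ v) then 1 else 0)
  have h : Sym2.map σ.symm e.1 = s(u, v) ↔ e.1 = s(σ u, σ v) := by
    rw [← (Sym2.map.injective σ.injective).eq_iff, Sym2.map_map]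
    simp
  simp only [h]

lemma single_comm {n : ℕ} (u v : Vtx n) : single u v = single v u := by
  funext e
  simp only [single, Sym2.eq_swap]

lemma graphs_add_self {n : ℕ} (γ : Graphs n) : γ + γ = 0 :=
  funext fun _ => CharTwo.add_self_eq_zero _

lemma DG.mk_mul_mk {n : ℕ} (γ δ : Graphs n) (σ τ : Perm (Vtx n)) :
    (⟨Multiplicative.ofAdd γ, σ⟩ : DG n) * ⟨Multiplicative.ofAdd δ, τ⟩ =
      ⟨Multiplicative.ofAdd (γ + gact σ δ), σ * τ⟩ :=
  rfl

lemma DG.mk_sq {n : ℕ} (γ : Graphs n) (σ : Perm (Vtx n)) :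
    (⟨Multiplicative.ofAdd γ, σ⟩ : DG n) ^ 2 =
      ⟨Multiplicative.ofAdd (γ + gact σ γ), σ ^ 2⟩ := by
  rw [sq, sq, DG.mk_mul_mk]

lemma Equiv.Perm.swap_mul_swap_sq {α : Type*} [DecidableEq α] {x y z t : α}
    (h : [x, y, z, t].Nodup) : (swap x y * swap z t) ^ 2 = 1 := by
  rw [(Perm.disjoint_swap_swap h).commute.mul_pow, sq, sq, swap_mul_self, swap_mul_self, one_mul]

lemma xgen_mul_xgen_mul_xgen {n : ℕ} {i j : Vtx n} (hi : i ≠ 0) (hj : j ≠ 0) (hij : i ≠ j) :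
    xgen i * xgen j * xgen i =
      ⟨Multiplicative.ofAdd (single 0 i + single i j + single j 0), swap i j⟩ := by
  simp only [xgen, DG.mk_mul_mk, gact_single, Perm.mul_apply, swap_apply_left, swap_apply_right,
    swap_apply_of_ne_of_ne hj hij.symm, swap_apply_of_ne_of_ne hi hij]
  rw [swap_comm 0 j, swap_mul_swap_mul_swap hj hij.symm]

theorem stmt4_general (n : ℕ) (i j k : Vtx n)
    (hi : i ≠ 0) (hj : j ≠ 0) (hk : k ≠ 0)
    (hij : i ≠ j) (hik : i ≠ k) (hjk : j ≠ k) :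
    (xgen i * xgen j * xgen i * xgen k) ^ 2 =
      ⟨Multiplicative.ofAdd (single 0 i + single i k + single k j + single j 0), 1⟩ := by
  have hprod : xgen i * xgen j * xgen i * xgen k =
      ⟨Multiplicative.ofAdd (single 0 i + single i j + single j 0 + single 0 k),
        swap i j * swap 0 k⟩ := by
    rw [xgen_mul_xgen_mul_xgen hi hj hij, xgen, DG.mk_mul_mk, gact_single,
      swap_apply_of_ne_of_ne hi.symm hj.symm, swap_apply_of_ne_of_ne hik.symm hjk.symm]
  rw [hprod, DG.mk_sq, Perm.swap_mul_swap_sq (by simp [*, eq_comm])]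
  congr 2
  simp only [map_add, gact_single, Perm.mul_apply, swap_apply_left, swap_apply_right,
    swap_apply_of_ne_of_ne hi hik, swap_apply_of_ne_of_ne hj hjk,
    swap_apply_of_ne_of_ne hi.symm hj.symm, swap_apply_of_ne_of_ne hik.symm hjk.symm]
  rw [single_comm j i, single_comm k 0]
  calc _ = single 0 i + single i k + single k j + single j 0 + (single i j + single i j)
        + (single 0 k + single 0 k) := by abel
    _ = _ := by simp only [graphs_add_self, add_zero]

/-- For `n ≥ 3` and distinct `i, j, k ∈ {1,…,n}`, in `Graphs(n+1) ⋊ S_{n+1}` one has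
`(x_i x_j x_i x_k)² = (e_{0i} + e_{ik} + e_{kj} + e_{j0}, id)`, the 4-cycle graph on
the vertices `0, i, k, j` paired with the identity permutation. -/
theorem stmt4 (n : ℕ) (hn : 3 ≤ n) (i j k : Vtx n)
    (hi : i ≠ 0) (hj : j ≠ 0) (hk : k ≠ 0)
    (hij : i ≠ j) (hik : i ≠ k) (hjk : j ≠ k) :
    (xgen i * xgen j * xgen i * xgen k) ^ 2 =
      ⟨Multiplicative.ofAdd (single 0 i + single i k + single k j + single j 0), 1⟩ :=
  stmt4_general n i j k hi hj hk hij hik hjk
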